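/- The closure of the cell $e_{(a,J)}$ in $\mathbb{R}^m$ equals the union of all cells $e_{(a',J')}$ with $(a,J) \ge (a',J')$ in the cell poset order; i.e., the cubical cell decomposition of $\mathbb{R}^m$ satisfies the axiom of the frontier. -/
import Mathlib

open Set

/-- The open cell `e_{(a,J)} ⊆ ℝ^m`: coordinates in `J` lie in the open interval
`(a_i, a_i + 1)` and the remaining coordinates equal `a_i`. -/
def cell (m : ℕ) (a : Fin m → ℤ) (J : Set (Fin m)) : Set (Fin m → ℝ) :=
  {x | ∀ i, (i ∈ J → (a i : ℝ) < x i ∧ x i < a i + 1) ∧ (i ∉ J → x i = a i)}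

/-- The closure of the cell `e_{(a,J)}` in `ℝ^m` is the union of all cells
`e_{(a',J')}` with `(a,J) ≥ (a',J')` in the cell poset order (the axiom of the
frontier for the cubical cell decomposition of `ℝ^m`). -/
theorem cell_closure_eq_union (m : ℕ) (a : Fin m → ℤ) (J : Set (Fin m)) :
    closure (cell m a J) =
      ⋃ (p : (Fin m → ℤ) × Set (Fin m))
        (_ : ∃ N : Set (Fin m), N ⊆ J ∧
          (∀ l, p.1 l = a l + N.indicator (fun _ => (1 : ℤ)) l) ∧ p.2 ⊆ J \ N),
        cell m p.1 p.2 := by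
  classical
  have hcell : cell m a J = Set.univ.pi
      (fun i => if i ∈ J then Set.Ioo (a i : ℝ) ((a i : ℝ) + 1) else {(a i : ℝ)}) := by
    ext x
    simp only [cell, mem_setOf_eq, mem_univ_pi]
    constructor
    · intro h i
      by_cases hi : i ∈ J
      · simpa [hi] using (h i).1 hi
      · simpa [hi] using (h i).2 hi
    · intro h i
      by_cases hi : i ∈ J
      · exact ⟨fun _ => by simpa [hi] using h i, fun h' => absurd hi h'⟩
      · exact ⟨fun h' => absurd h' hi, fun _ => by simpa [hi] using h i⟩
  have hclos : closure (cell m a J) = Set.univ.pi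
      (fun i => if i ∈ J then Set.Icc (a i : ℝ) ((a i : ℝ) + 1) else {(a i : ℝ)}) := by
    rw [hcell, closure_pi_set]
    refine congrArg (Set.univ.pi) ?_
    funext i
    by_cases hi : i ∈ J
    · simp [hi, closure_Ioo (by norm_num : (a i : ℝ) ≠ (a i : ℝ) + 1)]
    · simp [hi]
  rw [hclos]
  ext x
  simp only [mem_univ_pi, mem_iUnion]
  constructor
  · intro h
    set N : Set (Fin m) := {i | i ∈ J ∧ x i = (a i : ℝ) + 1} with hN
    set J' : Set (Fin m) := {i | i ∈ J ∧ (a i : ℝ) < x i ∧ x i < (a i : ℝ) + 1} with hJ'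
    refine ⟨(fun l => a l + N.indicator (fun _ => (1 : ℤ)) l, J'),
      ⟨N, fun i hi => hi.1, fun l => rfl, fun i hi => ⟨hi.1, fun hiN => absurd hiN.2 hi.2.2.ne⟩⟩,
      fun i => ⟨fun hi => ?_, fun hi => ?_⟩⟩
    · have hiN : i ∉ N := fun hiN => absurd hiN.2 hi.2.2.ne
      simp only [Set.indicator_of_notMem hiN, add_zero]
      exact ⟨hi.2.1, by exact_mod_cast hi.2.2⟩
    · by_cases hiJ : i ∈ J
      · have hIcc := h i
        rw [if_pos hiJ] at hIcc
        by_cases htop : x i = (a i : ℝ) + 1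
        · have hiN : i ∈ N := ⟨hiJ, htop⟩
          simp only [Set.indicator_of_mem hiN]
          push_cast
          linarith [htop]
        · have hlt : x i < (a i : ℝ) + 1 := lt_of_le_of_ne hIcc.2 htop
          have hle : x i = (a i : ℝ) := by
            by_contra hne
            exact hi ⟨hiJ, lt_of_le_of_ne hIcc.1 (Ne.symm hne), hlt⟩
          have hiN : i ∉ N := fun hiN => htop hiN.2
          simp only [Set.indicator_of_notMem hiN, add_zero]
          exact_mod_cast hle
      · have hx := h i
        rw [if_neg hiJ] at hx
        have hiN : i ∉ N := fun hiN => hiJ hiN.1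
        simp only [Set.indicator_of_notMem hiN, add_zero]
        exact_mod_cast hx
  · rintro ⟨⟨a', J'⟩, ⟨N, hNJ, ha', hJ'⟩, hx⟩
    intro i
    by_cases hiJ : i ∈ J
    · rw [if_pos hiJ]
      by_cases hiJ' : i ∈ J'
      · have hiN : i ∉ N := (hJ' hiJ').2
        have := (hx i).1 hiJ'
        rw [ha' i, Set.indicator_of_notMem hiN, add_zero] at this
        exact ⟨this.1.le, this.2.le⟩
      · have hxe := (hx i).2 hiJ'
        by_cases hiN : i ∈ N
        · rw [ha' i, Set.indicator_of_mem hiN] at hxe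
          push_cast at hxe
          constructor <;> linarith [hxe]
        · rw [ha' i, Set.indicator_of_notMem hiN, add_zero] at hxe
          constructor <;> linarith [hxe]
    · rw [if_neg hiJ]
      have hiJ' : i ∉ J' := fun hiJ' => hiJ (hJ' hiJ').1
      have hiN : i ∉ N := fun hiN => hiJ (hNJ hiN)
      have hxe := (hx i).2 hiJ'
      rw [ha' i, Set.indicator_of_notMem hiN, add_zero] at hxe
      exact_mod_cast hxe
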